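/- arXiv:2301.12100 — 4 statements merged into one kernel-verified Lean document; each statement's English description precedes it below -/
import Mathlib

section
/- Soundness of the returned lower bound: let φ : [a, b] → ℝ be Lipschitz, let a = a₀ < a₁ < ⋯ < a_{n+1} = b be a partition, and suppose for each i the constant lᵢ is a valid Lipschitz constant for φ on [aᵢ, a_{i+1}]. Define Rᵢ = (φ(aᵢ) + φ(a_{i+1}))/2 + lᵢ·(aᵢ − a_{i+1})/2 and R_min = min_i Rᵢ. Then R_min ≤ min_{x ∈ [a, b]} φ(x). -/
open Set

/-- The paper's `Rᵢ` for a subinterval `[c, d]` with Lipschitz constant `L`. -/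
noncomputable def intervalLowerBound (φ : ℝ → ℝ) (L c d : ℝ) : ℝ :=
  (φ c + φ d) / 2 + L * (c - d) / 2

/- Adding the Lipschitz estimates from the two endpoints makes the distances to `x`
sum to `d - c`, independently of where `x` lies. -/
theorem intervalLowerBound_le {φ : ℝ → ℝ} {L c d x : ℝ} (hx : x ∈ Icc c d)
    (hc : |φ c - φ x| ≤ L * |c - x|) (hd : |φ d - φ x| ≤ L * |d - x|) :
    intervalLowerBound φ L c d ≤ φ x := by
  rw [abs_of_nonpos (sub_nonpos.2 hx.1)] at hc
  rw [abs_of_nonneg (sub_nonneg.2 hx.2)] at hd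
  have hc' := (le_abs_self _).trans hc
  have hd' := (le_abs_self _).trans hd
  unfold intervalLowerBound
  linarith

theorem Fin.exists_mem_Icc_castSucc_succ {α : Type*} [LinearOrder α] :
    ∀ {n : ℕ} (a : Fin (n + 2) → α) {x : α}, x ∈ Icc (a 0) (a (Fin.last (n + 1))) →
      ∃ i : Fin (n + 1), x ∈ Icc (a i.castSucc) (a i.succ)
  | 0, _, _, hx => ⟨0, hx⟩
  | n + 1, a, x, hx => by
    rcases le_or_gt x (a (Fin.last (n + 1)).castSucc) with hle | hgt
    · obtain ⟨i, hi⟩ := Fin.exists_mem_Icc_castSucc_succ (a ∘ Fin.castSucc) ⟨hx.1, hle⟩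
      exact ⟨i.castSucc, hi⟩
    · exact ⟨Fin.last (n + 1), hgt.le, hx.2⟩

theorem Rmin_le_min_general (φ : ℝ → ℝ) (n : ℕ) (a : Fin (n + 2) → ℝ)
    (l : Fin (n + 1) → ℝ)
    (hlip : ∀ i : Fin (n + 1), ∀ x ∈ Set.Icc (a i.castSucc) (a i.succ),
      ∀ y ∈ Set.Icc (a i.castSucc) (a i.succ), |φ x - φ y| ≤ l i * |x - y|) :
    ∀ x ∈ Set.Icc (a 0) (a (Fin.last (n + 1))),
      Finset.univ.inf' Finset.univ_nonempty
        (fun i : Fin (n + 1) =>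
          (φ (a i.castSucc) + φ (a i.succ)) / 2 +
            l i * (a i.castSucc - a i.succ) / 2) ≤ φ x := by
  intro x hx
  obtain ⟨i, hxi⟩ := Fin.exists_mem_Icc_castSucc_succ a hx
  have hleft : a i.castSucc ∈ Icc (a i.castSucc) (a i.succ) := ⟨le_rfl, hxi.1.trans hxi.2⟩
  have hright : a i.succ ∈ Icc (a i.castSucc) (a i.succ) := ⟨hxi.1.trans hxi.2, le_rfl⟩
  exact Finset.inf'_le_of_le _ (Finset.mem_univ i) <|
    intervalLowerBound_le hxi (hlip i _ hleft x hxi) (hlip i _ hright x hxi)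

/-- Soundness of the returned lower bound `R_min = min_i R_i` over a
partition `a 0 < ⋯ < a (n+1)` of the domain. -/
theorem Rmin_le_min (φ : ℝ → ℝ) (n : ℕ) (a : Fin (n + 2) → ℝ)
    (hmono : StrictMono a)
    (l : Fin (n + 1) → ℝ) (hl : ∀ i, 0 ≤ l i)
    (hlip : ∀ i : Fin (n + 1), ∀ x ∈ Set.Icc (a i.castSucc) (a i.succ),
      ∀ y ∈ Set.Icc (a i.castSucc) (a i.succ), |φ x - φ y| ≤ l i * |x - y|) :
    ∀ x ∈ Set.Icc (a 0) (a (Fin.last (n + 1))),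
      Finset.univ.inf' Finset.univ_nonempty
        (fun i : Fin (n + 1) =>
          (φ (a i.castSucc) + φ (a i.succ)) / 2 +
            l i * (a i.castSucc - a i.succ) / 2) ≤ φ x :=
  Rmin_le_min_general φ n a l hlip
end

section
/- Monotone increase of characteristic values under interval splitting: let φ be Lipschitz with constant l_j on [a_j, a_{j+1}], let R_j = (φ(a_j)+φ(a_{j+1}))/2 + l_j(a_j − a_{j+1})/2 and x_j^R = (φ(a_j) − φ(a_{j+1}))/(2l_j) + (a_{j+1}+a_j)/2 with l_j > 0. Splitting [a_j, a_{j+1}] at x_j^R, define R_new¹ = (φ(a_j)+φ(x_j^R))/2 + l_j(a_j − x_j^R)/2 and R_new² = (φ(x_j^R)+φ(a_{j+1}))/2 + l_j(x_j^R − a_{j+1})/2. Then R_new¹ ≥ R_j and R_new² ≥ R_j. -/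
/-- Splitting the interval `[a_j, a_{j+1}]` at the Piyavskii–Shubert point
`x_j^R` produces two characteristic values that are at least the old one. -/
theorem characteristic_value_monotone_split (φ : ℝ → ℝ) (aj aj1 lj : ℝ)
    (hle : aj ≤ aj1) (hlj : 0 < lj)
    (hlip : ∀ x ∈ Set.Icc aj aj1, ∀ y ∈ Set.Icc aj aj1,
      |φ x - φ y| ≤ lj * |x - y|) :
    (φ aj + φ aj1) / 2 + lj * (aj - aj1) / 2 ≤
      (φ aj + φ ((φ aj - φ aj1) / (2 * lj) + (aj1 + aj) / 2)) / 2 +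
        lj * (aj - ((φ aj - φ aj1) / (2 * lj) + (aj1 + aj) / 2)) / 2 ∧
    (φ aj + φ aj1) / 2 + lj * (aj - aj1) / 2 ≤
      (φ ((φ aj - φ aj1) / (2 * lj) + (aj1 + aj) / 2) + φ aj1) / 2 +
        lj * (((φ aj - φ aj1) / (2 * lj) + (aj1 + aj) / 2) - aj1) / 2 := by
  set x := (φ aj - φ aj1) / (2 * lj) + (aj1 + aj) / 2 with hx
  have haj : aj ∈ Set.Icc aj aj1 := ⟨le_refl _, hle⟩
  have haj1 : aj1 ∈ Set.Icc aj aj1 := ⟨hle, le_refl _⟩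
  have hends := hlip aj haj aj1 haj1
  have habs : |φ aj - φ aj1| ≤ lj * (aj1 - aj) := by
    have : |aj - aj1| = aj1 - aj := by
      rw [abs_sub_comm, abs_of_nonneg (by linarith)]
    rwa [this] at hends
  have h1 := abs_le.mp habs
  have hl2 : (0:ℝ) < 2 * lj := by linarith
  have hxlo : aj ≤ x := by
    rw [hx]
    have : -(lj * (aj1 - aj)) / (2 * lj) ≤ (φ aj - φ aj1) / (2 * lj) :=
      div_le_div_of_nonneg_right h1.1 hl2.le
    have heq : -(lj * (aj1 - aj)) / (2 * lj) = -(aj1 - aj) / 2 := by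
      field_simp
    nlinarith [this, heq]
  have hxhi : x ≤ aj1 := by
    rw [hx]
    have : (φ aj - φ aj1) / (2 * lj) ≤ lj * (aj1 - aj) / (2 * lj) :=
      div_le_div_of_nonneg_right h1.2 hl2.le
    have heq : lj * (aj1 - aj) / (2 * lj) = (aj1 - aj) / 2 := by
      field_simp
    nlinarith [this, heq]
  have hxm : x ∈ Set.Icc aj aj1 := ⟨hxlo, hxhi⟩
  have hA := hlip aj haj x hxm
  have hB := hlip x hxm aj1 haj1
  rw [abs_of_nonpos (by linarith : aj - x ≤ 0)] at hA
  rw [abs_of_nonpos (by linarith : x - aj1 ≤ 0)] at hB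
  have hA' : φ aj - φ x ≤ lj * (x - aj) := by
    have := (abs_le.mp hA).2; linarith [neg_neg (aj - x)]
  have hB' : φ aj1 - φ x ≤ lj * (aj1 - x) := by
    have := (abs_le.mp hB).1; linarith
  clear hx habs h1 hends
  clear_value x
  constructor
  · have h : lj * (aj - x) / 2 - lj * (aj - aj1) / 2 = lj * (aj1 - x) / 2 := by ring
    linarith [hB', h]
  · have h : lj * (x - aj1) / 2 - lj * (aj - aj1) / 2 = lj * (x - aj) / 2 := by ring
    linarith [hA', h]
end

section
/- The value R_min^k returned at any iteration of the Piyavskii–Shubert scheme satisfies R_min^k − φ_min ≤ 0, where φ_min = min_{x∈[a,b]} φ(x); specifically, if φ_min = φ(x_min) with x_min ∈ [aᵢ, a_{i+1}] and lᵢ is a valid Lipschitz constant on that subinterval, then Rᵢ − φ_min = (φ(aᵢ) − φ_min)/2 + lᵢ(aᵢ − x_min)/2 + (φ_min − φ(a_{i+1}))/2 + lᵢ(x_min − a_{i+1})/2 ≤ 0. -/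
/-- Soundness at any iteration: if the global minimum `φ_min = φ x_min` is
attained in `[aᵢ, a_{i+1}]` on which `lᵢ` is a valid Lipschitz constant, then
the characteristic value `Rᵢ` satisfies `Rᵢ − φ_min ≤ 0`. -/
theorem Ri_le_phimin (φ : ℝ → ℝ) (A B ai ai1 li : ℝ)
    (hle : ai ≤ ai1) (hli : 0 ≤ li)
    (hsub : Set.Icc ai ai1 ⊆ Set.Icc A B)
    (hlip : ∀ x ∈ Set.Icc ai ai1, ∀ y ∈ Set.Icc ai ai1,
      |φ x - φ y| ≤ li * |x - y|)
    (xmin : ℝ) (hxmem : xmin ∈ Set.Icc ai ai1)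
    (hmin : ∀ x ∈ Set.Icc A B, φ xmin ≤ φ x) :
    (φ ai + φ ai1) / 2 + li * (ai - ai1) / 2 - φ xmin ≤ 0 := by
  have hai : ai ∈ Set.Icc ai ai1 := ⟨le_refl _, hle⟩
  have hai1 : ai1 ∈ Set.Icc ai ai1 := ⟨hle, le_refl _⟩
  have h1 := hlip ai hai xmin hxmem
  have h2 := hlip ai1 hai1 xmin hxmem
  have hx1 : |ai - xmin| = xmin - ai := by
    rw [abs_sub_comm, abs_of_nonneg (by linarith [hxmem.1])]
  have hx2 : |ai1 - xmin| = ai1 - xmin := abs_of_nonneg (by linarith [hxmem.2])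
  rw [hx1] at h1; rw [hx2] at h2
  have b1 := abs_le.mp h1
  have b2 := abs_le.mp h2
  linarith [b1.2, b2.2]
end

section
/- Local Lipschitz constant validity of the local adjustment rule: let φ : [a,b] → ℝ be C¹, let a = a₀ < ⋯ < a_n = b, mᵢ = |φ(a_{i+1}) − φ(aᵢ)|/(a_{i+1} − aᵢ), M = maxᵢ mᵢ, dᵢ = a_{i+1} − aᵢ, D = maxᵢ dᵢ, and lᵢ = r·max{m_{i−1}, mᵢ, m_{i+1}, M·dᵢ/D} with r > 1. Then as the partition is refined so that dᵢ → 0 with the neighbourhood points dense in a neighbourhood of [aᵢ, a_{i+1}], lᵢ converges to r·sup_{x∈[aᵢ,a_{i+1}]}|φ'(x)|, which strictly exceeds the best local Lipschitz constant kᵢ^best = sup_{x∈[aᵢ,a_{i+1}]}|φ'(x)| whenever it is positive. -/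
open Filter

/-- Slope of `φ` over the `j`-th subinterval of the partition `P`. -/
noncomputable def slopeM (φ : ℝ → ℝ) {n : ℕ} (P : Fin (n + 2) → ℝ)
    (j : Fin (n + 1)) : ℝ :=
  |φ (P j.succ) - φ (P j.castSucc)| / (P j.succ - P j.castSucc)

/-- Length of the `j`-th subinterval. -/
noncomputable def dLen {n : ℕ} (P : Fin (n + 2) → ℝ) (j : Fin (n + 1)) : ℝ :=
  P j.succ - P j.castSucc

/-- Maximal observed slope `M`. -/
noncomputable def Mmax (φ : ℝ → ℝ) {n : ℕ} (P : Fin (n + 2) → ℝ) : ℝ :=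
  Finset.univ.sup' Finset.univ_nonempty (slopeM φ P)

/-- Maximal subinterval length `D`. -/
noncomputable def Dmax {n : ℕ} (P : Fin (n + 2) → ℝ) : ℝ :=
  Finset.univ.sup' Finset.univ_nonempty (dLen P)

/-- The local-adjustment estimate
`lᵢ = r · max{m_{i−1}, mᵢ, m_{i+1}, M·dᵢ/D}` for an interior interval. -/
noncomputable def llocal (φ : ℝ → ℝ) (r : ℝ) {n : ℕ} (P : Fin (n + 2) → ℝ)
    (j : ℕ) (hj0 : 0 < j) (hjn : j < n) : ℝ :=
  r * max (max (slopeM φ P ⟨j - 1, by omega⟩) (slopeM φ P ⟨j, by omega⟩))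
      (max (slopeM φ P ⟨j + 1, by omega⟩) (Mmax φ P * dLen P ⟨j, by omega⟩ / Dmax P))

open Set Topology

/-!
By the mean value theorem each observed slope `mⱼ` equals `|φ' c|` at some point `c` of its
subinterval, and by compactness the supremum of `|φ'|` over `[aᵢ, aᵢ₊₁]` is attained at such a
point as well. The three subintervals around `aᵢ` shrink to `x̄`, so continuity of `φ'` sends all
four quantities to `|φ' x̄|`. The global term `M·dᵢ/D` tends to `0` since `M ≤ max_{[a,b]} |φ'|`.
Hence `lᵢ` and `r · sup |φ'|` have the same limit `r · |φ' x̄|`.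
-/

section Slopes

variable {φ φ' : ℝ → ℝ} {s : Set ℝ} {ι : Type*} {l : Filter ι}

theorem exists_mem_Icc_abs_slope_eq
    (hderiv : ∀ x ∈ s, HasDerivWithinAt φ (φ' x) s x)
    {x y : ℝ} (hxy : x < y) (hsub : Icc x y ⊆ s) :
    ∃ c ∈ Icc x y, |φ y - φ x| / (y - x) = |φ' c| := by
  have hφ : ContinuousOn φ (Icc x y) := fun z hz =>
    (hderiv z (hsub hz)).continuousWithinAt.mono hsub
  have hφ' : ∀ z ∈ Ioo x y, HasDerivAt φ (φ' z) z := fun z hz =>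
    (hderiv z (hsub (Ioo_subset_Icc_self hz))).hasDerivAt
      (mem_of_superset (Icc_mem_nhds hz.1 hz.2) hsub)
  obtain ⟨c, hc, hslope⟩ := exists_hasDerivAt_eq_slope φ φ' hxy hφ hφ'
  refine ⟨c, Ioo_subset_Icc_self hc, ?_⟩
  rw [hslope, abs_div, abs_of_pos (sub_pos.2 hxy)]

theorem tendsto_of_eq_apply_mem_Icc {g : ℝ → ℝ} {x₀ : ℝ} (hg : ContinuousWithinAt g s x₀)
    {x y u : ι → ℝ} (hx : Tendsto x l (𝓝 x₀)) (hy : Tendsto y l (𝓝 x₀))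
    (hsub : ∀ k, Icc (x k) (y k) ⊆ s) (hu : ∀ k, ∃ c ∈ Icc (x k) (y k), u k = g c) :
    Tendsto u l (𝓝 (g x₀)) := by
  choose c hc hu using hu
  have hc_lim : Tendsto c l (𝓝[s] x₀) :=
    tendsto_nhdsWithin_iff.2
      ⟨tendsto_of_tendsto_of_tendsto_of_le_of_le hx hy (fun k => (hc k).1) (fun k => (hc k).2),
        Eventually.of_forall fun k => hsub k (hc k)⟩
  exact (hg.tendsto.comp hc_lim).congr fun k => (hu k).symm

theorem tendsto_abs_slope (hderiv : ∀ x ∈ s, HasDerivWithinAt φ (φ' x) s x) {x₀ : ℝ}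
    (hcont : ContinuousWithinAt φ' s x₀) {x y : ι → ℝ}
    (hx : Tendsto x l (𝓝 x₀)) (hy : Tendsto y l (𝓝 x₀))
    (hxy : ∀ k, x k < y k) (hsub : ∀ k, Icc (x k) (y k) ⊆ s) :
    Tendsto (fun k => |φ (y k) - φ (x k)| / (y k - x k)) l (𝓝 |φ' x₀|) :=
  tendsto_of_eq_apply_mem_Icc hcont.abs hx hy hsub fun k =>
    exists_mem_Icc_abs_slope_eq hderiv (hxy k) (hsub k)

theorem tendsto_sSup_image_abs_Icc (hcont : ContinuousOn φ' s) {x₀ : ℝ} (hx₀ : x₀ ∈ s)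
    {x y : ι → ℝ} (hx : Tendsto x l (𝓝 x₀)) (hy : Tendsto y l (𝓝 x₀))
    (hxy : ∀ k, x k ≤ y k) (hsub : ∀ k, Icc (x k) (y k) ⊆ s) :
    Tendsto (fun k => sSup ((fun z => |φ' z|) '' Icc (x k) (y k))) l (𝓝 |φ' x₀|) :=
  tendsto_of_eq_apply_mem_Icc (hcont x₀ hx₀).abs hx hy hsub fun k =>
    isCompact_Icc.exists_sSup_image_eq (nonempty_Icc.2 (hxy k)) ((hcont.mono (hsub k)).abs)

end Slopes

section Partition

variable {φ φ' : ℝ → ℝ} {a b : ℝ}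

theorem slopeM_nonneg {n : ℕ} {P : Fin (n + 2) → ℝ} (hP : Monotone P) (j : Fin (n + 1)) :
    0 ≤ slopeM φ P j :=
  div_nonneg (abs_nonneg _) (sub_nonneg.2 (hP j.castSucc_le_succ))

theorem Mmax_nonneg {n : ℕ} {P : Fin (n + 2) → ℝ} (hP : Monotone P) : 0 ≤ Mmax φ P :=
  (slopeM_nonneg hP 0).trans (Finset.le_sup' _ (Finset.mem_univ 0))

theorem tendsto_apply_of_index_le_of_le {ι : Type*} {l : Filter ι} {N : ι → ℕ}
    {P : ∀ k, Fin (N k + 2) → ℝ} (hP : ∀ k, Monotone (P k)) {i : ι → ℕ} (hiN : ∀ k, i k < N k)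
    {x₀ : ℝ} (hB : Tendsto (fun k => P k ⟨i k - 1, by have := hiN k; omega⟩) l (𝓝 x₀))
    (hE : Tendsto (fun k => P k ⟨i k + 2, by have := hiN k; omega⟩) l (𝓝 x₀))
    (j : ∀ k, Fin (N k + 2)) (hj : ∀ k, i k - 1 ≤ j k ∧ j k ≤ i k + 2) :
    Tendsto (fun k => P k (j k)) l (𝓝 x₀) :=
  tendsto_of_tendsto_of_tendsto_of_le_of_le hB hE (fun k => hP k (Fin.le_def.2 (hj k).1))
    fun k => hP k (Fin.le_def.2 (hj k).2)

variable (hderiv : ∀ x ∈ Icc a b, HasDerivWithinAt φ (φ' x) (Icc a b) x)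
include hderiv

theorem Mmax_le_sSup (hcont : ContinuousOn φ' (Icc a b)) {n : ℕ} {P : Fin (n + 2) → ℝ}
    (hP : StrictMono P) (hmem : ∀ j, P j ∈ Icc a b) :
    Mmax φ P ≤ sSup ((fun x => |φ' x|) '' Icc a b) := by
  refine Finset.sup'_le _ _ fun j _ => ?_
  have hsub : Icc (P j.castSucc) (P j.succ) ⊆ Icc a b := Icc_subset_Icc (hmem _).1 (hmem _).2
  obtain ⟨c, hc, hslope⟩ := exists_mem_Icc_abs_slope_eq hderiv (hP j.castSucc_lt_succ) hsub
  rw [slopeM, hslope]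
  exact le_csSup (isCompact_Icc.image_of_continuousOn hcont.abs).bddAbove
    (mem_image_of_mem _ (hsub hc))

variable {ι : Type*} {l : Filter ι} {N : ι → ℕ} {P : ∀ k, Fin (N k + 2) → ℝ}
  (hmono : ∀ k, StrictMono (P k)) (hmem : ∀ k j, P k j ∈ Icc a b)
include hmono hmem

theorem tendsto_Mmax_mul_dLen_div_Dmax (hcont : ContinuousOn φ' (Icc a b))
    {j : ∀ k, Fin (N k + 1)} (hdD : Tendsto (fun k => dLen (P k) (j k) / Dmax (P k)) l (𝓝 0)) :
    Tendsto (fun k => Mmax φ (P k) * dLen (P k) (j k) / Dmax (P k)) l (𝓝 0) := by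
  simp_rw [mul_div_assoc]
  exact bdd_le_mul_tendsto_zero (.of_forall fun k => Mmax_nonneg (hmono k).monotone)
    (.of_forall fun k => Mmax_le_sSup hderiv hcont (hmono k) (hmem k)) hdD

theorem tendsto_slopeM {x₀ : ℝ} (hcont : ContinuousWithinAt φ' (Icc a b) x₀)
    {j : ∀ k, Fin (N k + 1)} (hl : Tendsto (fun k => P k (j k).castSucc) l (𝓝 x₀))
    (hr : Tendsto (fun k => P k (j k).succ) l (𝓝 x₀)) :
    Tendsto (fun k => slopeM φ (P k) (j k)) l (𝓝 |φ' x₀|) :=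
  tendsto_abs_slope hderiv hcont hl hr (fun k => hmono k (j k).castSucc_lt_succ)
    fun _ => Icc_subset_Icc (hmem _ _).1 (hmem _ _).2

theorem tendsto_llocal (hcont : ContinuousOn φ' (Icc a b)) (r : ℝ) {i : ι → ℕ}
    (hi0 : ∀ k, 0 < i k) (hiN : ∀ k, i k < N k) {x₀ : ℝ} (hx₀ : x₀ ∈ Icc a b)
    (hB : Tendsto (fun k => P k ⟨i k - 1, by have := hiN k; omega⟩) l (𝓝 x₀))
    (hE : Tendsto (fun k => P k ⟨i k + 2, by have := hiN k; omega⟩) l (𝓝 x₀))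
    (hdD : Tendsto (fun k =>
        dLen (P k) ⟨i k, by have := hiN k; omega⟩ / Dmax (P k)) l (𝓝 0)) :
    Tendsto (fun k => llocal φ r (P k) (i k) (hi0 k) (hiN k)) l (𝓝 (r * |φ' x₀|)) := by
  have hpt := tendsto_apply_of_index_le_of_le (fun k => (hmono k).monotone) hiN hB hE
  have hslope (j : ∀ k, Fin (N k + 1)) (hj : ∀ k, i k - 1 ≤ j k ∧ j k ≤ i k + 1) :
      Tendsto (fun k => slopeM φ (P k) (j k)) l (𝓝 |φ' x₀|) :=
    tendsto_slopeM hderiv hmono hmem (hcont x₀ hx₀)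
      (hpt _ fun k => by have := hj k; simp only [Fin.val_castSucc]; omega)
      (hpt _ fun k => by have := hj k; simp only [Fin.val_succ]; omega)
  rw [show |φ' x₀| = max (max |φ' x₀| |φ' x₀|) (max |φ' x₀| 0) by simp]
  refine (((hslope _ ?_).max (hslope _ ?_)).max ((hslope _ ?_).max
    (tendsto_Mmax_mul_dLen_div_Dmax hderiv hmono hmem hcont hdD))).const_mul r
  all_goals intro k; simp only; omega

end Partition

/-- In the fine-partition limit, the local adjustment estimate `lᵢ` converges
to `r · sup_{x∈[aᵢ,a_{i+1}]}|φ'(x)|`, which strictly exceeds the best local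
Lipschitz constant `sup_{x∈[aᵢ,a_{i+1}]}|φ'(x)|` whenever the latter is
positive. -/
theorem local_adjustment_convergence (φ φ' : ℝ → ℝ) (a b : ℝ)
    (r : ℝ) (hr : 1 < r)
    (hderiv : ∀ x ∈ Set.Icc a b, HasDerivWithinAt φ (φ' x) (Set.Icc a b) x)
    (hcont : ContinuousOn φ' (Set.Icc a b))
    (N : ℕ → ℕ) (P : ∀ k, Fin (N k + 2) → ℝ)
    (hmono : ∀ k, StrictMono (P k))
    (hfirst : ∀ k, P k 0 = a) (hlast : ∀ k, P k (Fin.last (N k + 1)) = b)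
    (i : ℕ → ℕ) (hi0 : ∀ k, 0 < i k) (hiN : ∀ k, i k < N k)
    (xbar : ℝ) (hxbar : xbar ∈ Set.Icc a b)
    -- the chosen subinterval and its two neighbours shrink to the point `xbar`
    (hB : Tendsto (fun k => P k ⟨i k - 1, by have := hiN k; omega⟩) atTop (nhds xbar))
    (hE : Tendsto (fun k => P k ⟨i k + 2, by have := hiN k; omega⟩) atTop (nhds xbar))
    -- the relative length `dᵢ/D` tends to 0
    (hdD : Tendsto (fun k =>
        dLen (P k) ⟨i k, by have := hiN k; omega⟩ / Dmax (P k)) atTop (nhds 0)) :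
    Tendsto (fun k =>
        llocal φ r (P k) (i k) (hi0 k) (hiN k) -
          r * sSup ((fun x => |φ' x|) ''
            Set.Icc (P k ⟨i k, by have := hiN k; omega⟩)
              (P k ⟨i k + 1, by have := hiN k; omega⟩)))
      atTop (nhds 0) ∧
    ∀ k, 0 < sSup ((fun x => |φ' x|) ''
          Set.Icc (P k ⟨i k, by have := hiN k; omega⟩)
            (P k ⟨i k + 1, by have := hiN k; omega⟩)) →
      sSup ((fun x => |φ' x|) ''
          Set.Icc (P k ⟨i k, by have := hiN k; omega⟩)
            (P k ⟨i k + 1, by have := hiN k; omega⟩)) <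
        r * sSup ((fun x => |φ' x|) ''
          Set.Icc (P k ⟨i k, by have := hiN k; omega⟩)
            (P k ⟨i k + 1, by have := hiN k; omega⟩)) := by
  have hmem : ∀ k j, P k j ∈ Icc a b := fun k j => by
    rw [← hfirst k, ← hlast k]
    exact ⟨(hmono k).monotone (Fin.zero_le j), (hmono k).monotone (Fin.le_last j)⟩
  have hpt := tendsto_apply_of_index_le_of_le (fun k => (hmono k).monotone) hiN hB hE
  have hsup := tendsto_sSup_image_abs_Icc hcont hxbar
    (hpt (fun k => ⟨i k, by have := hiN k; omega⟩) fun k => by simp only; omega)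
    (hpt (fun k => ⟨i k + 1, by have := hiN k; omega⟩) fun k => by simp only; omega)
    (fun k => (hmono k).monotone (Fin.mk_le_mk.2 (Nat.le_succ _)))
    fun _ => Icc_subset_Icc (hmem _ _).1 (hmem _ _).2
  refine ⟨?_, fun k hpos => lt_mul_of_one_lt_left hpos hr⟩
  simpa using
    (tendsto_llocal hderiv hmono hmem hcont r hi0 hiN hxbar hB hE hdD).sub (hsup.const_mul r)
end
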